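/- arXiv:2009.06188 — 2 statements merged into one kernel-verified Lean document; each statement's English description precedes it below -/
import Mathlib

section
/- For any two row-stochastic matrices P and Q of the same size, the coefficient of ergodicity is submultiplicative: κ(PQ) ≤ κ(P)·κ(Q). -/
open scoped BigOperators

/-- Coefficient of ergodicity of a `k × k` matrix. -/
noncomputable def ergCoeff {k : ℕ} (P : Matrix (Fin k) (Fin k) ℝ) : ℝ :=
  (1 / 2) * ⨆ p : Fin k × Fin k, ∑ s, |P p.1 s - P p.2 s|

theorem ergCoeff_submultiplicative {k : ℕ} (P Q : Matrix (Fin k) (Fin k) ℝ)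
    (hPnn : ∀ i j, 0 ≤ P i j) (hProw : ∀ i, ∑ j, P i j = 1)
    (hQnn : ∀ i j, 0 ≤ Q i j) (hQrow : ∀ i, ∑ j, Q i j = 1) :
    ergCoeff (P * Q) ≤ ergCoeff P * ergCoeff Q := by
  rcases Nat.eq_zero_or_pos k with hk | hk
  · subst hk
    simp [ergCoeff, ciSup_of_empty, Real.sSup_empty]
  have hne : Nonempty (Fin k) := ⟨⟨0, hk⟩⟩
  set M : ℝ := ⨆ p : Fin k × Fin k, ∑ s, |Q p.1 s - Q p.2 s| with hM
  set N : ℝ := ⨆ p : Fin k × Fin k, ∑ s, |P p.1 s - P p.2 s| with hN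
  have hbddQ : BddAbove (Set.range fun p : Fin k × Fin k => ∑ s, |Q p.1 s - Q p.2 s|) :=
    Set.Finite.bddAbove (Set.finite_range _)
  have hbddP : BddAbove (Set.range fun p : Fin k × Fin k => ∑ s, |P p.1 s - P p.2 s|) :=
    Set.Finite.bddAbove (Set.finite_range _)
  have hMle : ∀ t u : Fin k, ∑ s, |Q t s - Q u s| ≤ M := fun t u =>
    le_ciSup hbddQ (t, u)
  have hM0 : 0 ≤ M := le_trans (by positivity) (hMle ⟨0, hk⟩ ⟨0, hk⟩)
  -- key pointwise bound
  have key : ∀ i j : Fin k, ∑ s, |(P * Q) i s - (P * Q) j s|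
      ≤ (1 / 2) * (∑ t, |P i t - P j t|) * M := by
    intro i j
    set d : Fin k → ℝ := fun t => P i t - P j t with hd
    set a : Fin k → ℝ := fun t => max (d t) 0 with ha
    set b : Fin k → ℝ := fun t => max (-(d t)) 0 with hb
    have ha0 : ∀ t, 0 ≤ a t := fun t => le_max_right _ _
    have hb0 : ∀ t, 0 ≤ b t := fun t => le_max_right _ _
    have hab : ∀ t, d t = a t - b t := by
      intro t
      rcases le_total (d t) 0 with h | h
      · simp [ha, hb, max_eq_right h, max_eq_left (neg_nonneg.mpr h)]
      · simp [ha, hb, max_eq_left h, max_eq_right (neg_nonpos.mpr h)]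
    have habs : ∀ t, |d t| = a t + b t := by
      intro t
      rcases le_total (d t) 0 with h | h
      · simp [ha, hb, max_eq_right h, max_eq_left (neg_nonneg.mpr h), abs_of_nonpos h]
      · simp [ha, hb, max_eq_left h, max_eq_right (neg_nonpos.mpr h), abs_of_nonneg h]
    have hsumd : ∑ t, d t = 0 := by
      simp only [hd, Finset.sum_sub_distrib, hProw i, hProw j, sub_self]
    set δ : ℝ := ∑ t, a t with hδ
    have hδb : ∑ t, b t = δ := by
      have : ∑ t, (a t - b t) = 0 := by
        have e : ∑ t, (a t - b t) = ∑ t, d t := Finset.sum_congr rfl fun t _ => (hab t).symm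
        rw [e, hsumd]
      rw [Finset.sum_sub_distrib] at this
      linarith
    have hδ0 : 0 ≤ δ := Finset.sum_nonneg fun t _ => ha0 t
    have hsumabs : ∑ t, |d t| = 2 * δ := by
      rw [Finset.sum_congr rfl fun t _ => habs t, Finset.sum_add_distrib, hδb]; ring
    -- inner difference
    have hinner : ∀ s, (P * Q) i s - (P * Q) j s = ∑ t, d t * Q t s := by
      intro s
      simp only [Matrix.mul_apply, ← Finset.sum_sub_distrib]
      exact Finset.sum_congr rfl fun t _ => by rw [hd]; ring
    rcases eq_or_lt_of_le hδ0 with hδz | hδpos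
    · -- all d are 0
      have hdz : ∀ t, d t = 0 := by
        intro t
        have h1 : a t = 0 :=
          (Finset.sum_eq_zero_iff_of_nonneg fun t _ => ha0 t).mp hδz.symm t (Finset.mem_univ t)
        have h2 : b t = 0 := by
          have := hδb.trans hδz.symm
          exact (Finset.sum_eq_zero_iff_of_nonneg fun t _ => hb0 t).mp this t (Finset.mem_univ t)
        rw [hab t, h1, h2, sub_zero]
      have : ∑ s, |(P * Q) i s - (P * Q) j s| = 0 := by
        apply Finset.sum_eq_zero
        intro s _
        rw [hinner s, Finset.sum_eq_zero fun t _ => by rw [hdz t, zero_mul], abs_zero]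
      rw [this]
      have : ∑ t, |P i t - P j t| = 0 := by
        show ∑ t, |d t| = 0
        rw [hsumabs, ← hδz]; ring
      rw [this]
      simp
    · -- main case, δ > 0
      have hmain : ∀ s, δ * (∑ t, d t * Q t s) =
          ∑ t, ∑ u, a t * b u * (Q t s - Q u s) := by
        intro s
        have e1 : ∀ t, ∑ u, a t * b u * (Q t s - Q u s)
            = a t * Q t s * δ - a t * (∑ u, b u * Q u s) := by
          intro t
          have h1 : ∀ u, a t * b u * (Q t s - Q u s)
              = a t * Q t s * b u - a t * (b u * Q u s) := fun u => by ring
          rw [Finset.sum_congr rfl fun u _ => h1 u, Finset.sum_sub_distrib,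
            ← Finset.mul_sum, ← Finset.mul_sum, hδb]
        rw [Finset.sum_congr rfl fun t _ => e1 t, Finset.sum_sub_distrib,
          ← Finset.sum_mul, ← Finset.sum_mul, ← hδ]
        have e2 : ∑ t, d t * Q t s = ∑ t, a t * Q t s - ∑ t, b t * Q t s := by
          rw [← Finset.sum_sub_distrib]
          exact Finset.sum_congr rfl fun t _ => by rw [hab t]; ring
        rw [e2]; ring
      have hbound : ∀ s, δ * |∑ t, d t * Q t s| ≤
          ∑ t, ∑ u, a t * b u * |Q t s - Q u s| := by
        intro s
        calc δ * |∑ t, d t * Q t s| = |δ * ∑ t, d t * Q t s| := by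
              rw [abs_mul, abs_of_nonneg hδ0]
          _ = |∑ t, ∑ u, a t * b u * (Q t s - Q u s)| := by rw [hmain s]
          _
            ≤ ∑ t, |∑ u, a t * b u * (Q t s - Q u s)| := Finset.abs_sum_le_sum_abs _ _
          _ ≤ ∑ t, ∑ u, |a t * b u * (Q t s - Q u s)| :=
              Finset.sum_le_sum fun t _ => Finset.abs_sum_le_sum_abs _ _
          _ = ∑ t, ∑ u, a t * b u * |Q t s - Q u s| := by
              refine Finset.sum_congr rfl fun t _ => Finset.sum_congr rfl fun u _ => ?_
              rw [abs_mul, abs_mul, abs_of_nonneg (ha0 t), abs_of_nonneg (hb0 u)]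
      have hstep : δ * (∑ s, |∑ t, d t * Q t s|) ≤ δ * δ * M := by
        calc δ * (∑ s, |∑ t, d t * Q t s|) = ∑ s, δ * |∑ t, d t * Q t s| := by
              rw [Finset.mul_sum]
          _ ≤ ∑ s, ∑ t, ∑ u, a t * b u * |Q t s - Q u s| :=
              Finset.sum_le_sum fun s _ => hbound s
          _ = ∑ t, ∑ u, a t * b u * (∑ s, |Q t s - Q u s|) := by
              rw [Finset.sum_comm]
              refine Finset.sum_congr rfl fun t _ => ?_
              rw [Finset.sum_comm]
              refine Finset.sum_congr rfl fun u _ => ?_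
              rw [Finset.mul_sum]
          _ ≤ ∑ t, ∑ u, a t * b u * M := by
              refine Finset.sum_le_sum fun t _ => Finset.sum_le_sum fun u _ => ?_
              exact mul_le_mul_of_nonneg_left (hMle t u) (mul_nonneg (ha0 t) (hb0 u))
          _ = δ * δ * M := by
              have e3 : ∀ t, ∑ u, a t * b u * M = a t * M * δ := by
                intro t
                have h1 : ∀ u, a t * b u * M = a t * M * b u := fun u => by ring
                rw [Finset.sum_congr rfl fun u _ => h1 u, ← Finset.mul_sum, hδb]
              rw [Finset.sum_congr rfl fun t _ => e3 t, ← Finset.sum_mul, ← Finset.sum_mul,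
                ← hδ]
              ring
      have hδne : δ ≠ 0 := ne_of_gt hδpos
      have hfinal : ∑ s, |∑ t, d t * Q t s| ≤ δ * M := by
        calc ∑ s, |∑ t, d t * Q t s| = δ⁻¹ * (δ * (∑ s, |∑ t, d t * Q t s|)) := by
              rw [← mul_assoc, inv_mul_cancel₀ hδne, one_mul]
          _ ≤ δ⁻¹ * (δ * δ * M) := by
              exact mul_le_mul_of_nonneg_left hstep (inv_nonneg.mpr hδ0)
          _ = δ * M := by
              rw [show δ * δ * M = δ * (δ * M) by ring, ← mul_assoc,
                inv_mul_cancel₀ hδne, one_mul]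
      calc ∑ s, |(P * Q) i s - (P * Q) j s| = ∑ s, |∑ t, d t * Q t s| := by
            exact Finset.sum_congr rfl fun s _ => by rw [hinner s]
        _ ≤ δ * M := hfinal
        _ = (1 / 2) * (∑ t, |P i t - P j t|) * M := by
            rw [show (∑ t, |P i t - P j t|) = ∑ t, |d t| from rfl, hsumabs]; ring
  -- conclude
  have hNle : ∀ i j : Fin k, ∑ t, |P i t - P j t| ≤ N := fun i j =>
    le_ciSup hbddP (i, j)
  have hsup : (⨆ p : Fin k × Fin k, ∑ s, |(P * Q) p.1 s - (P * Q) p.2 s|)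
      ≤ (1 / 2) * N * M := by
    apply ciSup_le
    intro p
    calc ∑ s, |(P * Q) p.1 s - (P * Q) p.2 s| ≤ (1 / 2) * (∑ t, |P p.1 t - P p.2 t|) * M :=
          key p.1 p.2
      _ ≤ (1 / 2) * N * M := by
          apply mul_le_mul_of_nonneg_right _ hM0
          have := hNle p.1 p.2
          linarith
  have : ergCoeff (P * Q) ≤ (1 / 2) * ((1 / 2) * N * M) := by
    rw [ergCoeff]
    apply mul_le_mul_of_nonneg_left hsup (by norm_num)
  calc ergCoeff (P * Q) ≤ (1 / 2) * ((1 / 2) * N * M) := this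
    _ = ergCoeff P * ergCoeff Q := by rw [ergCoeff, ergCoeff, ← hM, ← hN]; ring
end

section
/- Consider the Gibbs measure π_T(a) ∝ g(a)·exp(−μ(a)/T) on a finite set A with unique minimizer a* of μ. Then the derivative of π_{T}(a*) with respect to T is negative for all T > 0; i.e., π_T(a*) is strictly decreasing in T. -/
open scoped BigOperators

/-- Gibbs measure at temperature `T` with weights `g` and energies `μ`. -/
noncomputable def gibbs {A : Type*} [Fintype A] (g μ : A → ℝ) (T : ℝ) (a : A) : ℝ :=
  g a * Real.exp (-μ a / T) / ∑ a', g a' * Real.exp (-μ a' / T)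

/-!
Differentiating the Gibbs weight gives `d/dT π_T(a) = π_T(a) (μ a - ⟪μ⟫_T) / T²`, where
`⟪μ⟫_T = ∑ b, π_T(b) μ b` is the mean energy. Since `π_T` is a probability vector with full
support, the mean energy strictly exceeds the minimum `μ a*` as soon as there is a second state,
so the derivative at `a*` is negative; the mean value theorem then gives strict antitonicity.
-/

open Finset

lemma hasDerivAt_exp_neg_div (c : ℝ) {T : ℝ} (hT : T ≠ 0) :
    HasDerivAt (fun t => Real.exp (-c / t)) (Real.exp (-c / T) * (c / T ^ 2)) T := by
  have h := (hasDerivAt_const T (-c)).fun_div (hasDerivAt_id T) hT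
  simp only [id] at h
  exact (h.congr_deriv (by ring)).exp

lemma lt_sum_mul_of_unique_min {A : Type*} [Fintype A] {w μ : A → ℝ}
    (hw : ∀ a, 0 < w a) (hw₁ : ∑ a, w a = 1) {astar b : A} (hb : b ≠ astar)
    (hmin : ∀ a, a ≠ astar → μ astar < μ a) :
    μ astar < ∑ a, w a * μ a := by
  have hgap : 0 < ∑ a, w a * (μ a - μ astar) := by
    refine sum_pos' (fun a _ => mul_nonneg (hw a).le ?_) ⟨b, mem_univ b, ?_⟩
    · rcases eq_or_ne a astar with rfl | ha
      · exact (sub_self _).ge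
      · exact (sub_pos.2 (hmin a ha)).le
    · exact mul_pos (hw b) (sub_pos.2 (hmin b hb))
  have hsplit : ∑ a, w a * (μ a - μ astar) = ∑ a, w a * μ a - μ astar := by
    simp only [mul_sub, sum_sub_distrib, ← sum_mul, hw₁, one_mul]
  linarith

section Gibbs

variable {A : Type*} [Fintype A] {g : A → ℝ} (μ : A → ℝ)

lemma partitionFunction_pos [Nonempty A] (hg : ∀ a, 0 < g a) (T : ℝ) :
    0 < ∑ a, g a * Real.exp (-μ a / T) :=
  sum_pos (fun a _ => mul_pos (hg a) (Real.exp_pos _)) univ_nonempty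

lemma gibbs_pos (hg : ∀ a, 0 < g a) (T : ℝ) (a : A) : 0 < gibbs g μ T a :=
  have : Nonempty A := ⟨a⟩
  div_pos (mul_pos (hg a) (Real.exp_pos _)) (partitionFunction_pos μ hg T)

lemma sum_gibbs [Nonempty A] (hg : ∀ a, 0 < g a) (T : ℝ) : ∑ a, gibbs g μ T a = 1 := by
  simp only [gibbs, ← sum_div]
  exact div_self (partitionFunction_pos μ hg T).ne'

lemma hasDerivAt_gibbs (hg : ∀ a, 0 < g a) {T : ℝ} (hT : T ≠ 0) (a : A) :
    HasDerivAt (fun T => gibbs g μ T a)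
      (gibbs g μ T a * (μ a - ∑ b, gibbs g μ T b * μ b) / T ^ 2) T := by
  have : Nonempty A := ⟨a⟩
  have hterm (b : A) : HasDerivAt (fun t => g b * Real.exp (-μ b / t))
      (g b * Real.exp (-μ b / T) * (μ b / T ^ 2)) T := by
    simpa only [mul_assoc] using (hasDerivAt_exp_neg_div (μ b) hT).const_mul (g b)
  have hZ := (partitionFunction_pos μ hg T).ne'
  have hmean : ∑ b, gibbs g μ T b * μ b =
      (∑ b, g b * Real.exp (-μ b / T) * μ b) / ∑ b, g b * Real.exp (-μ b / T) := by
    simp only [gibbs, div_mul_eq_mul_div, sum_div]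
  have henergy : ∑ b, g b * Real.exp (-μ b / T) * (μ b / T ^ 2) =
      (∑ b, g b * Real.exp (-μ b / T) * μ b) / T ^ 2 := by
    simp only [mul_div_assoc', sum_div]
  refine ((hterm a).div (HasDerivAt.fun_sum fun b _ => hterm b) hZ).congr_deriv ?_
  rw [henergy, hmean, gibbs]
  generalize Real.exp (-μ a / T) = e at *
  generalize ∑ b, g b * Real.exp (-μ b / T) = Z at *
  field_simp

lemma hasDerivAt_gibbs_neg_of_unique_min (hg : ∀ a, 0 < g a) {T : ℝ} (hT : 0 < T)
    {astar b : A} (hb : b ≠ astar) (hmin : ∀ a, a ≠ astar → μ astar < μ a) :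
    ∃ D < 0, HasDerivAt (fun T => gibbs g μ T astar) D T := by
  have : Nonempty A := ⟨astar⟩
  refine ⟨_, ?_, hasDerivAt_gibbs μ hg hT.ne' astar⟩
  have hmean := lt_sum_mul_of_unique_min (gibbs_pos μ hg T) (sum_gibbs μ hg T) hb hmin
  exact div_neg_of_neg_of_pos (mul_neg_of_pos_of_neg (gibbs_pos μ hg T astar)
    (sub_neg.2 hmean)) (pow_pos hT 2)

end Gibbs

theorem gibbs_optimal_strictAnti {A : Type*} [Fintype A]
    (hcard : 1 < Fintype.card A)
    (g μ : A → ℝ) (hg : ∀ a, 0 < g a) (astar : A)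
    (hmin : ∀ a, a ≠ astar → μ astar < μ a) :
    (∀ T : ℝ, 0 < T → deriv (fun T => gibbs g μ T astar) T < 0) ∧
    StrictAntiOn (fun T => gibbs g μ T astar) (Set.Ioi 0) := by
  obtain ⟨b, hb⟩ := Fintype.exists_ne_of_one_lt_card hcard astar
  have hderiv (T : ℝ) (hT : 0 < T) := hasDerivAt_gibbs_neg_of_unique_min μ hg hT hb hmin
  have hderiv_neg (T : ℝ) (hT : 0 < T) : deriv (fun T => gibbs g μ T astar) T < 0 := by
    obtain ⟨D, hD_neg, hD⟩ := hderiv T hT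
    rwa [hD.deriv]
  refine ⟨hderiv_neg, strictAntiOn_of_deriv_neg (convex_Ioi 0) ?_ ?_⟩
  · intro T hT
    obtain ⟨D, -, hD⟩ := hderiv T hT
    exact hD.continuousAt.continuousWithinAt
  · rw [interior_Ioi]
    exact hderiv_neg
end
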